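/- The pair (Z_+, ⋄), where Z_+ = {0,1,2,...} and m⋄n = {x ∈ Z_+ : |m−n| ≤ x ≤ m+n and x ≡ m+n (mod 2)}, is a multisemigroup: for all a, b, c ∈ Z_+ one has ⋃_{t ∈ a⋄b} t⋄c = ⋃_{s ∈ b⋄c} a⋄s. Moreover, 0 is a unit of (Z_+, ⋄): m⋄0 = 0⋄m = {m} for all m ∈ Z_+. -/

import Mathlib

/-- The Clebsch–Gordan multioperation on `ℤ₊ = ℕ`:
`m ⋄ n = {x : |m − n| ≤ x ≤ m + n, x ≡ m + n (mod 2)}`. -/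
def cgDiamond (m n : ℕ) : Set ℕ :=
  {x : ℕ | Nat.dist m n ≤ x ∧ x ≤ m + n ∧ x % 2 = (m + n) % 2}

/-!
Writing `x ∈ (a ⋄ b) ⋄ c` as the existence of an intermediate `t`, one finds that it holds
exactly when `a + b + c + x` is even and each of `a, b, c, x` is at most the sum of the other
three (quadrilateral inequalities; `t = min (a + b) (c + x)` is a witness). This condition is
symmetric in `a, b, c`, and `⋄` is commutative, so `(a ⋄ b) ⋄ c = a ⋄ (b ⋄ c)`.
-/

theorem mem_cgDiamond {m n x : ℕ} :
    x ∈ cgDiamond m n ↔ Nat.dist m n ≤ x ∧ x ≤ m + n ∧ x % 2 = (m + n) % 2 :=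
  Iff.rfl

theorem cgDiamond_comm (m n : ℕ) : cgDiamond m n = cgDiamond n m := by
  ext x
  simp only [mem_cgDiamond, Nat.dist]
  omega

theorem mem_biUnion_cgDiamond_iff {a b c x : ℕ} :
    x ∈ ⋃ t ∈ cgDiamond a b, cgDiamond t c ↔
      x % 2 = (a + b + c) % 2 ∧ x ≤ a + b + c ∧
        a ≤ b + c + x ∧ b ≤ a + c + x ∧ c ≤ a + b + x := by
  simp only [Set.mem_iUnion, exists_prop, mem_cgDiamond, Nat.dist]
  constructor
  · rintro ⟨t, h⟩
    omega
  · intro h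
    exact ⟨min (a + b) (c + x), by omega⟩

theorem cgDiamond_assoc (a b c : ℕ) :
    (⋃ t ∈ cgDiamond a b, cgDiamond t c) = ⋃ s ∈ cgDiamond b c, cgDiamond a s := by
  simp_rw [cgDiamond_comm a]
  ext x
  rw [mem_biUnion_cgDiamond_iff, mem_biUnion_cgDiamond_iff]
  omega

theorem cgDiamond_zero_right (m : ℕ) : cgDiamond m 0 = {m} := by
  ext x
  simp only [mem_cgDiamond, Set.mem_singleton_iff, Nat.dist]
  omega

/-- `(ℤ₊, ⋄)` is a multisemigroup (the multivalued operation is associative), and `0`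
is a unit for it: `m ⋄ 0 = 0 ⋄ m = {m}`. -/
theorem cgDiamond_multisemigroup_with_unit :
    (∀ a b c : ℕ, (⋃ t ∈ cgDiamond a b, cgDiamond t c) =
      ⋃ s ∈ cgDiamond b c, cgDiamond a s) ∧
    (∀ m : ℕ, cgDiamond m 0 = {m} ∧ cgDiamond 0 m = {m}) :=
  ⟨cgDiamond_assoc, fun m =>
    ⟨cgDiamond_zero_right m, by rw [cgDiamond_comm, cgDiamond_zero_right]⟩⟩
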